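/- arXiv:1606.06958 — 3 statements merged into one kernel-verified Lean document; each statement's English description precedes it below -/
import Mathlib

section
/- Let W be a bipartite graphon on an atomless probability space Ω. Then every extreme point of the fractional vertex cover polyton C(W) takes values in {0,1} almost everywhere. -/
open MeasureTheory Set

/-- A graphon: symmetric measurable `[0,1]`-valued kernel. -/
def IsGraphon {Ω : Type*} [MeasurableSpace Ω] (W : Ω → Ω → ℝ) : Prop :=
  Measurable (Function.uncurry W) ∧ (∀ x y, W x y = W y x) ∧ ∀ x y, W x y ∈ Set.Icc (0:ℝ) 1

/-- A graphon is bipartite if `Ω` splits into two positive-measure parts with `W = 0`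
a.e. on both diagonal blocks. -/
def IsBipartite {Ω : Type*} [MeasurableSpace Ω] (ν : Measure Ω) (W : Ω → Ω → ℝ) : Prop :=
  ∃ A : Set Ω, MeasurableSet A ∧ 0 < ν A ∧ 0 < ν Aᶜ ∧
    ∀ᵐ p ∂(ν.prod ν), ((p.1 ∈ A ∧ p.2 ∈ A) ∨ (p.1 ∉ A ∧ p.2 ∉ A)) → W p.1 p.2 = 0

/-- A fractional vertex cover of a graphon `W`. -/
def IsFracCover {Ω : Type*} [MeasurableSpace Ω] (ν : Measure Ω) (W : Ω → Ω → ℝ)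
    (c : Ω → ℝ) : Prop :=
  Measurable c ∧ (∀ x, c x ∈ Set.Icc (0:ℝ) 1) ∧
    ∀ᵐ p ∂(ν.prod ν), 0 < W p.1 p.2 → 1 ≤ c p.1 + c p.2

/-- `c` is an extreme point of the fractional vertex cover polyton `C(W)`
(equality of functions taken almost everywhere). -/
def IsExtremeCover {Ω : Type*} [MeasurableSpace Ω] (ν : Measure Ω) (W : Ω → Ω → ℝ)
    (c : Ω → ℝ) : Prop :=
  IsFracCover ν W c ∧ ∀ c' c'' : Ω → ℝ, IsFracCover ν W c' → IsFracCover ν W c'' →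
    (c =ᵐ[ν] fun x => (c' x + c'' x) / 2) → c' =ᵐ[ν] c ∧ c'' =ᵐ[ν] c

/-!
Let `A` be one side of the bipartition and `m = min c (1 - c)` the distance of `c` to `{0, 1}`.
Moving `c` by `+m` on `A` and by `-m` on `Aᶜ`, or the other way round, keeps `c` inside `[0, 1]`,
and on an edge crossing the cut it replaces the values `a, b` by `min (2a) 1` and
`max (2b - 1) 0`, whose sum is still at least `1` when `a + b ≥ 1`. So `c` is the midpoint of
two covers, and extremality forces `m = 0` almost everywhere.
-/

lemma add_mem_Icc_of_abs_le_min {a t : ℝ} (h : |t| ≤ min a (1 - a)) : a + t ∈ Icc (0 : ℝ) 1 := by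
  have hle := abs_le.mp (h.trans (min_le_left a (1 - a)))
  have hle' := abs_le.mp (h.trans (min_le_right a (1 - a)))
  constructor <;> linarith

lemma one_le_add_min_add_sub_min {a b : ℝ} (ha : a ∈ Icc (0 : ℝ) 1) (hb : b ∈ Icc (0 : ℝ) 1)
    (hab : 1 ≤ a + b) : 1 ≤ (a + min a (1 - a)) + (b - min b (1 - b)) := by
  obtain ⟨ha0, ha1⟩ := ha
  obtain ⟨hb0, hb1⟩ := hb
  rcases min_cases a (1 - a) with ⟨h, _⟩ | ⟨h, _⟩ <;>
    rcases min_cases b (1 - b) with ⟨h', _⟩ | ⟨h', _⟩ <;> linarith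

lemma eq_zero_or_eq_one_of_min_eq_zero {a : ℝ} (h : min a (1 - a) = 0) : a = 0 ∨ a = 1 := by
  rcases min_cases a (1 - a) with ⟨h', _⟩ | ⟨h', _⟩
  · left; linarith
  · right; linarith

section CutShift

variable {Ω : Type*}

open Classical in
noncomputable def cutShift (A : Set Ω) (c : Ω → ℝ) (x : Ω) : ℝ :=
  if x ∈ A then min (c x) (1 - c x) else -min (c x) (1 - c x)

lemma cutShift_compl (A : Set Ω) (c : Ω → ℝ) : cutShift Aᶜ c = -cutShift A c := by
  ext x
  by_cases hx : x ∈ A <;> simp [cutShift, hx]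

lemma abs_cutShift {c : Ω → ℝ} (hc : ∀ x, c x ∈ Icc (0 : ℝ) 1) (A : Set Ω) (x : Ω) :
    |cutShift A c x| = min (c x) (1 - c x) := by
  have hm : 0 ≤ min (c x) (1 - c x) := le_min (hc x).1 (sub_nonneg.mpr (hc x).2)
  unfold cutShift
  split_ifs
  · exact abs_of_nonneg hm
  · rw [abs_neg, abs_of_nonneg hm]

variable [MeasurableSpace Ω]

lemma measurable_cutShift {A : Set Ω} (hA : MeasurableSet A) {c : Ω → ℝ} (hc : Measurable c) :
    Measurable (cutShift A c) := by
  have hm : Measurable fun x => min (c x) (1 - c x) := hc.min (measurable_const.sub hc)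
  exact Measurable.ite hA hm hm.neg

lemma IsFracCover.add_cutShift {ν : Measure Ω} {W : Ω → Ω → ℝ} {c : Ω → ℝ}
    (hc : IsFracCover ν W c) {A : Set Ω} (hA : MeasurableSet A)
    (hcut : ∀ᵐ p ∂(ν.prod ν), 0 < W p.1 p.2 → (p.1 ∈ A ↔ p.2 ∉ A)) :
    IsFracCover ν W fun x => c x + cutShift A c x := by
  obtain ⟨hcm, hc01, hcov⟩ := hc
  refine ⟨hcm.add (measurable_cutShift hA hcm),
    fun x => add_mem_Icc_of_abs_le_min (abs_cutShift hc01 A x).le, ?_⟩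
  filter_upwards [hcov, hcut] with p hcov hcut hW
  have hsum := hcov hW
  by_cases h₁ : p.1 ∈ A
  · have h₂ : p.2 ∉ A := (hcut hW).mp h₁
    simp only [cutShift, h₁, h₂, if_true, if_false, ← sub_eq_add_neg]
    linarith [one_le_add_min_add_sub_min (hc01 p.1) (hc01 p.2) hsum]
  · have h₂ : p.2 ∈ A := not_not.mp (mt (hcut hW).mpr h₁)
    simp only [cutShift, h₁, h₂, if_true, if_false, ← sub_eq_add_neg]
    linarith [one_le_add_min_add_sub_min (hc01 p.2) (hc01 p.1) (by linarith)]

lemma IsFracCover.sub_cutShift {ν : Measure Ω} {W : Ω → Ω → ℝ} {c : Ω → ℝ}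
    (hc : IsFracCover ν W c) {A : Set Ω} (hA : MeasurableSet A)
    (hcut : ∀ᵐ p ∂(ν.prod ν), 0 < W p.1 p.2 → (p.1 ∈ A ↔ p.2 ∉ A)) :
    IsFracCover ν W fun x => c x - cutShift A c x := by
  have hcut' : ∀ᵐ p ∂(ν.prod ν), 0 < W p.1 p.2 → (p.1 ∈ Aᶜ ↔ p.2 ∉ Aᶜ) := by
    filter_upwards [hcut] with p hp hW
    simp only [mem_compl_iff, not_not]
    tauto
  simpa only [cutShift_compl, Pi.neg_apply, ← sub_eq_add_neg] using hc.add_cutShift hA.compl hcut'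

end CutShift

theorem stmt_3_general {Ω : Type*} [MeasurableSpace Ω] (ν : Measure Ω)
    (W : Ω → Ω → ℝ) (hbip : IsBipartite ν W)
    (c : Ω → ℝ) (hc : IsExtremeCover ν W c) :
    ∀ᵐ x ∂ν, c x = 0 ∨ c x = 1 := by
  obtain ⟨A, hA, -, -, hblocks⟩ := hbip
  obtain ⟨hcover, hextreme⟩ := hc
  have hcut : ∀ᵐ p ∂(ν.prod ν), 0 < W p.1 p.2 → (p.1 ∈ A ↔ p.2 ∉ A) := by
    filter_upwards [hblocks] with p hp hW
    by_contra h
    exact hW.ne' (hp (by tauto))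
  obtain ⟨hplus, -⟩ := hextreme _ _ (hcover.add_cutShift hA hcut) (hcover.sub_cutShift hA hcut)
    (Filter.Eventually.of_forall fun x => by ring)
  filter_upwards [hplus] with x hx
  have hshift : cutShift A c x = 0 := by linarith
  refine eq_zero_or_eq_one_of_min_eq_zero ?_
  rw [← abs_cutShift hcover.2.1 A x, hshift, abs_zero]

theorem stmt_3 {Ω : Type*} [MeasurableSpace Ω] (ν : Measure Ω) [IsProbabilityMeasure ν]
    [NullSingletonClass ν] (W : Ω → Ω → ℝ) (hW : IsGraphon W) (hbip : IsBipartite ν W)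
    (c : Ω → ℝ) (hc : IsExtremeCover ν W c) :
    ∀ᵐ x ∂ν, c x = 0 ∨ c x = 1 :=
  stmt_3_general ν W hbip c hc
end

section
/- Let W be a graphon on an atomless probability space Ω. Then every extreme point of the fractional vertex cover polyton C(W) takes values in {0, 1/2, 1} almost everywhere. -/
/-!
If `c` is a fractional vertex cover, so is `f ∘ c` for every monotone `f : ℝ → ℝ` with `f 0 = 0`
and `f (1 - t) = 1 - f t`: indeed `1 - b ≤ a` gives `1 - f b = f (1 - b) ≤ f a`. Let `g` be the
1-Lipschitz signed distance to `{0, 1/2, 1}`, pointing towards `1/2`; it satisfies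
`g (1 - t) = - g t`, so `t ↦ t + g t` and `t ↦ t - g t` are two such maps. The cover `c` is their
midpoint, so by extremality `g ∘ c = 0` a.e., i.e. `c` takes values in `{0, 1/2, 1}` a.e.
-/

open MeasureTheory Set

theorem IsFracCover.comp_of_monotone {Ω : Type*} [MeasurableSpace Ω] {ν : Measure Ω}
    {W : Ω → Ω → ℝ} {c : Ω → ℝ} {f : ℝ → ℝ} (hc : IsFracCover ν W c) (hf : Monotone f)
    (hf0 : f 0 = 0) (hf_one_sub : ∀ t, f (1 - t) = 1 - f t) :
    IsFracCover ν W (f ∘ c) := by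
  obtain ⟨hmeas, hrange, hcover⟩ := hc
  have hf1 : f 1 = 1 := by simpa [hf0] using hf_one_sub 0
  refine ⟨hf.measurable.comp hmeas, fun x => ?_, ?_⟩
  · rw [← hf0, ← hf1]
    exact ⟨hf (hrange x).1, hf (hrange x).2⟩
  · filter_upwards [hcover] with p hp hWp
    have : f (1 - c p.2) ≤ f (c p.1) := hf (by linarith [hp hWp])
    simp only [Function.comp_apply]
    linarith [hf_one_sub (c p.2)]

noncomputable def halfIntegralGap (t : ℝ) : ℝ :=
  max (min t (1 / 2 - t)) (t - 1)

theorem halfIntegralGap_eq_zero_iff {t : ℝ} :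
    halfIntegralGap t = 0 ↔ t = 0 ∨ t = 1 / 2 ∨ t = 1 := by
  unfold halfIntegralGap
  constructor
  · intro h
    rcases max_choice (min t (1 / 2 - t)) (t - 1) with hmax | hmax <;>
      rcases min_choice t (1 / 2 - t) with hmin | hmin <;>
      rw [hmax] at h <;> grind
  · rintro (rfl | rfl | rfl) <;> norm_num

theorem halfIntegralGap_one_sub (t : ℝ) : halfIntegralGap (1 - t) = -halfIntegralGap t := by
  unfold halfIntegralGap
  simp only [max_def, min_def]
  split_ifs <;> linarith

theorem abs_halfIntegralGap_sub_le (x y : ℝ) :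
    |halfIntegralGap x - halfIntegralGap y| ≤ |x - y| :=
  calc |halfIntegralGap x - halfIntegralGap y|
      ≤ max |min x (1 / 2 - x) - min y (1 / 2 - y)| |(x - 1) - (y - 1)| :=
        abs_max_sub_max_le_max _ _ _ _
    _ ≤ max (max |x - y| |(1 / 2 - x) - (1 / 2 - y)|) |(x - 1) - (y - 1)| :=
        max_le_max_right _ (abs_min_sub_min_le_max _ _ _ _)
    _ = |x - y| := by
        rw [show (1 / 2 - x) - (1 / 2 - y) = -(x - y) by ring,
          show (x - 1) - (y - 1) = x - y by ring, abs_neg, max_self, max_self]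

theorem monotone_add_mul_halfIntegralGap {s : ℝ} (hs : |s| ≤ 1) :
    Monotone fun t => t + s * halfIntegralGap t := by
  intro x y hxy
  have hgap : |halfIntegralGap x - halfIntegralGap y| ≤ y - x :=
    (abs_halfIntegralGap_sub_le x y).trans_eq
      (by rw [abs_sub_comm, abs_of_nonneg (sub_nonneg.mpr hxy)])
  have : s * (halfIntegralGap x - halfIntegralGap y) ≤ y - x :=
    calc s * (halfIntegralGap x - halfIntegralGap y)
        ≤ |s| * |halfIntegralGap x - halfIntegralGap y| := by
          rw [← abs_mul]; exact le_abs_self _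
      _ ≤ 1 * (y - x) := mul_le_mul hs hgap (abs_nonneg _) zero_le_one
      _ = y - x := one_mul _
  dsimp only
  linarith

theorem IsFracCover.add_mul_halfIntegralGap {Ω : Type*} [MeasurableSpace Ω] {ν : Measure Ω}
    {W : Ω → Ω → ℝ} {c : Ω → ℝ} (hc : IsFracCover ν W c) {s : ℝ} (hs : |s| ≤ 1) :
    IsFracCover ν W fun x => c x + s * halfIntegralGap (c x) :=
  hc.comp_of_monotone (f := fun t => t + s * halfIntegralGap t)
    (monotone_add_mul_halfIntegralGap hs) (by simp [halfIntegralGap_eq_zero_iff.mpr])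
    (fun t => by simp only [halfIntegralGap_one_sub]; ring)

theorem stmt_4_general {Ω : Type*} [MeasurableSpace Ω] (ν : Measure Ω)
    (W : Ω → Ω → ℝ)
    (c : Ω → ℝ) (hc : IsExtremeCover ν W c) :
    ∀ᵐ x ∂ν, c x = 0 ∨ c x = 1/2 ∨ c x = 1 := by
  obtain ⟨hcover, hextreme⟩ := hc
  have hsplit := hextreme _ _ (hcover.add_mul_halfIntegralGap (s := 1) (by simp))
    (hcover.add_mul_halfIntegralGap (s := -1) (by simp)) (ae_of_all _ fun x => by ring)
  filter_upwards [hsplit.1] with x hx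
  exact halfIntegralGap_eq_zero_iff.mp (by simpa using hx)

theorem stmt_4 {Ω : Type*} [MeasurableSpace Ω] (ν : Measure Ω) [IsProbabilityMeasure ν]
    [NullSingletonClass ν] (W : Ω → Ω → ℝ) (hW : IsGraphon W)
    (c : Ω → ℝ) (hc : IsExtremeCover ν W c) :
    ∀ᵐ x ∂ν, c x = 0 ∨ c x = 1/2 ∨ c x = 1 :=
  stmt_4_general ν W c hc
end

section
/- Let W:Ω²→[0,1] be a graphon and let (A_n) be a sequence of measurable subsets of Ω with ∫_{A_n×A_n} W → 0 as n → ∞. Suppose the indicator functions 1_{A_n} converge weak* in L^∞(Ω) to a function f:Ω→[0,1]. Then supp f is an independent set in W, i.e. for every δ>0 the set P = {x : f(x) > δ} satisfies ∫_{P×P} W = 0. -/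
/-! Put `F x = ∫ f y * W x y`. Weak* convergence gives `∫ y in A n, W x y → F x` for every `x`,
and since these degrees are bounded by `1` the convergence also holds in `L¹`. Hence
`∫_{A n × A n} W = ∫ x in A n, ∫ y in A n, W x y` has the same limit as `∫ x in A n, F x`,
which is `∫ f * F` by weak* convergence once more; so `∫∫ f x * f y * W x y = 0`.
On `{f > δ}²` this integrand dominates `δ² W`. -/

open MeasureTheory Set Filter Topology

section BoundedConvergence

variable {α : Type*} [MeasurableSpace α] {μ : Measure α} [IsFiniteMeasure μ]

lemma integrable_of_mem_Icc_zero_one {g : α → ℝ} (hg : AEStronglyMeasurable g μ)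
    (h : ∀ x, g x ∈ Icc (0 : ℝ) 1) : Integrable g μ :=
  .of_bound hg 1 <| ae_of_all _ fun x => by
    rw [Real.norm_eq_abs, abs_le]
    constructor <;> linarith [(h x).1, (h x).2]

lemma integral_mem_Icc_zero_one (hμ : μ.real univ ≤ 1) {g : α → ℝ}
    (hg : AEStronglyMeasurable g μ) (h : ∀ x, g x ∈ Icc (0 : ℝ) 1) :
    ∫ x, g x ∂μ ∈ Icc (0 : ℝ) 1 := by
  refine ⟨integral_nonneg fun x => (h x).1, ?_⟩
  calc ∫ x, g x ∂μ ≤ ∫ _, (1 : ℝ) ∂μ :=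
        integral_mono (integrable_of_mem_Icc_zero_one hg h) (integrable_const 1) fun x => (h x).2
    _ = μ.real univ := by simp
    _ ≤ 1 := hμ

variable {g : ℕ → α → ℝ} {G : α → ℝ} {C : ℝ}

lemma integrable_of_tendsto_of_norm_le (hg : ∀ n, AEStronglyMeasurable (g n) μ)
    (hgC : ∀ n x, ‖g n x‖ ≤ C) (hlim : ∀ x, Tendsto (fun n => g n x) atTop (𝓝 (G x))) :
    Integrable G μ :=
  .of_bound (aestronglyMeasurable_of_tendsto_ae _ hg (ae_of_all _ hlim)) C <|
    ae_of_all _ fun x => le_of_tendsto' (hlim x).norm fun n => hgC n x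

/-- Bounded pointwise convergence gives convergence in `L¹`, which is uniform over the
domains of integration `s n`. -/
lemma tendsto_setIntegral_sub_of_tendsto (hg : ∀ n, AEStronglyMeasurable (g n) μ)
    (hgC : ∀ n x, ‖g n x‖ ≤ C) (hlim : ∀ x, Tendsto (fun n => g n x) atTop (𝓝 (G x)))
    (s : ℕ → Set α) :
    Tendsto (fun n => ∫ x in s n, g n x ∂μ - ∫ x in s n, G x ∂μ) atTop (𝓝 0) := by
  have hgi : ∀ n, Integrable (g n) μ := fun n => .of_bound (hg n) C (ae_of_all _ (hgC n))
  have hGi : Integrable G μ := integrable_of_tendsto_of_norm_le hg hgC hlim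
  have hGC : ∀ x, ‖G x‖ ≤ C := fun x => le_of_tendsto' (hlim x).norm fun n => hgC n x
  have hL1 : Tendsto (fun n => ∫ x, ‖g n x - G x‖ ∂μ) atTop (𝓝 0) := by
    have h := tendsto_integral_of_dominated_convergence (f := fun _ => (0 : ℝ)) (fun _ => C + C)
      (fun n => ((hg n).sub hGi.1).norm) (integrable_const _)
      (fun n => ae_of_all _ fun x => (norm_norm (g n x - G x)).trans_le
        ((norm_sub_le _ _).trans (add_le_add (hgC n x) (hGC x))))
      (ae_of_all _ fun x => by simpa using ((hlim x).sub_const (G x)).norm)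
    rwa [integral_zero] at h
  refine squeeze_zero_norm (fun n => ?_) hL1
  rw [← integral_sub (hgi n).integrableOn hGi.integrableOn]
  exact (norm_integral_le_integral_norm _).trans <|
    setIntegral_le_integral ((hgi n).sub hGi).norm (ae_of_all _ fun _ => norm_nonneg _)

lemma tendsto_setIntegral_of_weakStar_of_tendsto {s : ℕ → Set α} {f : α → ℝ}
    (hweak : ∀ h : α → ℝ, Integrable h μ →
      Tendsto (fun n => ∫ x in s n, h x ∂μ) atTop (𝓝 (∫ x, f x * h x ∂μ)))
    (hg : ∀ n, AEStronglyMeasurable (g n) μ) (hgC : ∀ n x, ‖g n x‖ ≤ C)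
    (hlim : ∀ x, Tendsto (fun n => g n x) atTop (𝓝 (G x))) :
    Tendsto (fun n => ∫ x in s n, g n x ∂μ) atTop (𝓝 (∫ x, f x * G x ∂μ)) := by
  simpa using (hweak G (integrable_of_tendsto_of_norm_le hg hgC hlim)).add
    (tendsto_setIntegral_sub_of_tendsto hg hgC hlim s)

end BoundedConvergence

section Graphon

variable {Ω : Type*} [MeasurableSpace Ω] {ν : Measure Ω} [IsFiniteMeasure ν]
  {W : Ω → Ω → ℝ} {f : Ω → ℝ}

lemma sq_mul_setIntegral_superlevel_le (hWm : Measurable (Function.uncurry W))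
    (hW : ∀ x y, W x y ∈ Icc (0 : ℝ) 1) (hfm : Measurable f) (hf : ∀ x, f x ∈ Icc (0 : ℝ) 1)
    {δ : ℝ} (hδ : 0 ≤ δ) :
    δ ^ 2 * ∫ p in {x | δ < f x} ×ˢ {x | δ < f x}, W p.1 p.2 ∂ν.prod ν ≤
      ∫ x, f x * ∫ y, f y * W x y ∂ν ∂ν := by
  set P := {x | δ < f x}
  have hP : MeasurableSet P := measurableSet_lt measurable_const hfm
  have hfW : ∀ p : Ω × Ω, f p.1 * (f p.2 * W p.1 p.2) ∈ Icc (0 : ℝ) 1 := fun p =>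
    unitInterval.mul_mem (hf p.1) (unitInterval.mul_mem (hf p.2) (hW p.1 p.2))
  have hfWi : Integrable (fun p : Ω × Ω => f p.1 * (f p.2 * W p.1 p.2)) (ν.prod ν) :=
    integrable_of_mem_Icc_zero_one (by fun_prop) hfW
  calc δ ^ 2 * ∫ p in P ×ˢ P, W p.1 p.2 ∂ν.prod ν
      = ∫ p in P ×ˢ P, δ ^ 2 * W p.1 p.2 ∂ν.prod ν := (integral_const_mul _ _).symm
    _ ≤ ∫ p in P ×ˢ P, f p.1 * (f p.2 * W p.1 p.2) ∂ν.prod ν := by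
        refine setIntegral_mono_on ?_ hfWi.integrableOn (hP.prod hP) fun p hp => ?_
        · exact ((integrable_of_mem_Icc_zero_one hWm.aestronglyMeasurable
            fun p => hW p.1 p.2).const_mul _).integrableOn
        · rw [← mul_assoc, sq]
          exact mul_le_mul_of_nonneg_right
            (mul_le_mul hp.1.le hp.2.le hδ (hf p.1).1) (hW p.1 p.2).1
    _ ≤ ∫ p, f p.1 * (f p.2 * W p.1 p.2) ∂ν.prod ν :=
        setIntegral_le_integral hfWi (ae_of_all _ fun p => (hfW p).1)
    _ = ∫ x, f x * ∫ y, f y * W x y ∂ν ∂ν := by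
        simp_rw [integral_prod _ hfWi, integral_const_mul]

end Graphon

theorem stmt_17_general {Ω : Type*} [MeasurableSpace Ω] (ν : Measure Ω) [IsProbabilityMeasure ν]
    (W : Ω → Ω → ℝ) (hW : IsGraphon W)
    (A : ℕ → Set Ω)
    (hsmall : Tendsto (fun n => ∫ p in A n ×ˢ A n, W p.1 p.2 ∂(ν.prod ν)) atTop (𝓝 0))
    (f : Ω → ℝ) (hfmeas : Measurable f) (hf01 : ∀ x, f x ∈ Set.Icc (0:ℝ) 1)
    (hweak : ∀ g : Ω → ℝ, Integrable g ν →
      Tendsto (fun n => ∫ x in A n, g x ∂ν) atTop (𝓝 (∫ x, f x * g x ∂ν))) :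
    ∀ δ : ℝ, 0 < δ →
      (∫ p in {x | δ < f x} ×ˢ {x | δ < f x}, W p.1 p.2 ∂(ν.prod ν)) = 0 := by
  obtain ⟨hWm, -, hW01⟩ := hW
  have hWi : Integrable (fun p : Ω × Ω => W p.1 p.2) (ν.prod ν) :=
    integrable_of_mem_Icc_zero_one hWm.aestronglyMeasurable fun p => hW01 p.1 p.2
  have hdeg : ∀ n x, ∫ y in A n, W x y ∂ν ∈ Icc (0 : ℝ) 1 := fun n x =>
    integral_mem_Icc_zero_one (by simp [measureReal_le_one])
      hWm.of_uncurry_left.aestronglyMeasurable (hW01 x)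
  have hdeg_lim : ∀ x, Tendsto (fun n => ∫ y in A n, W x y ∂ν) atTop
      (𝓝 (∫ y, f y * W x y ∂ν)) := fun x =>
    hweak _ (integrable_of_mem_Icc_zero_one hWm.of_uncurry_left.aestronglyMeasurable (hW01 x))
  have hlim : Tendsto (fun n => ∫ p in A n ×ˢ A n, W p.1 p.2 ∂ν.prod ν) atTop
      (𝓝 (∫ x, f x * ∫ y, f y * W x y ∂ν ∂ν)) := by
    simp_rw [setIntegral_prod _ hWi.integrableOn]
    refine tendsto_setIntegral_of_weakStar_of_tendsto hweak
      (fun n => hWm.stronglyMeasurable.integral_prod_right'.aestronglyMeasurable) (C := 1)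
      (fun n x => ?_) hdeg_lim
    rw [Real.norm_eq_abs, abs_of_nonneg (hdeg n x).1]
    exact (hdeg n x).2
  have hzero := tendsto_nhds_unique hlim hsmall
  intro δ hδ
  have hbound := sq_mul_setIntegral_superlevel_le hWm hW01 hfmeas hf01 hδ.le (ν := ν)
  rw [hzero] at hbound
  exact le_antisymm (nonpos_of_mul_nonpos_right hbound (by positivity))
    (integral_nonneg fun p => (hW01 p.1 p.2).1)

theorem stmt_17 {Ω : Type*} [MeasurableSpace Ω] (ν : Measure Ω) [IsProbabilityMeasure ν]
    (W : Ω → Ω → ℝ) (hW : IsGraphon W)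
    (A : ℕ → Set Ω) (hA : ∀ n, MeasurableSet (A n))
    (hsmall : Tendsto (fun n => ∫ p in A n ×ˢ A n, W p.1 p.2 ∂(ν.prod ν)) atTop (𝓝 0))
    (f : Ω → ℝ) (hfmeas : Measurable f) (hf01 : ∀ x, f x ∈ Set.Icc (0:ℝ) 1)
    (hweak : ∀ g : Ω → ℝ, Integrable g ν →
      Tendsto (fun n => ∫ x in A n, g x ∂ν) atTop (𝓝 (∫ x, f x * g x ∂ν))) :
    ∀ δ : ℝ, 0 < δ →
      (∫ p in {x | δ < f x} ×ˢ {x | δ < f x}, W p.1 p.2 ∂(ν.prod ν)) = 0 :=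
  stmt_17_general ν W hW A hsmall f hfmeas hf01 hweak
end
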